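/- arXiv:1410.6867 — 4 statements merged into one kernel-verified Lean document; each statement's English description precedes it below -/
import Mathlib

section
/- (n-Amalgamation lemma) Let G be a finite abelian group and p a prime dividing |G|. Write the p-Sylow subgroup of G as C_{p^{a_1}} ⊕ ⋯ ⊕ C_{p^{a_k}} with a_1 ≥ a_2 ≥ ⋯ ≥ a_k ≥ 1 (setting a_j = 0 for j > k), and suppose a_n > a_{n+1} for some positive integer n. Let l be a positive integer divisible by p^{a_{n+1}+1}. If S is a dense zero-sum free sequence over G, then S contains at most η(C_p^n) − 1 elements of order l. -/
/-- The cross number `k(S)` of a sequence (finite multiset) `S` over an additive group: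
the sum, with multiplicity, of the reciprocals of the orders of its elements. -/
noncomputable def crossNum {G : Type*} [AddCommGroup G] (S : Multiset G) : ℝ :=
  (S.map fun g => ((addOrderOf g : ℝ))⁻¹).sum

/-- `S` is zero-sum free: no nonempty sub-multiset of `S` has sum `0`. -/
def IsZeroSumFree {G : Type*} [AddCommGroup G] (S : Multiset G) : Prop :=
  ∀ T : Multiset G, T ≤ S → T ≠ 0 → T.sum ≠ 0

/-- The little cross number `k(G)`: the maximal cross number of a zero-sum free
sequence over `G`. -/
noncomputable def littleK (G : Type*) [AddCommGroup G] : ℝ :=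
  sSup {x : ℝ | ∃ S : Multiset G, IsZeroSumFree S ∧ crossNum S = x}

/-- A zero-sum free sequence `S` over `G` is dense if it has maximal cross number and,
among zero-sum free sequences of maximal cross number, minimal length. -/
def IsDense {G : Type*} [AddCommGroup G] (S : Multiset G) : Prop :=
  IsZeroSumFree S ∧ crossNum S = littleK G ∧
    Multiset.card S =
      sInf {c : ℕ | ∃ T : Multiset G,
        IsZeroSumFree T ∧ crossNum T = littleK G ∧ Multiset.card T = c}

/-- The invariant `η(G)`: the smallest `l` such that every sequence over `G` of length
at least `l` has a nonempty zero-sum subsequence of length at most `exp(G)`. -/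
noncomputable def etaInv (G : Type*) [AddCommGroup G] : ℕ :=
  sInf {l : ℕ | ∀ S : Multiset G, l ≤ Multiset.card S →
    ∃ T : Multiset G, T ≤ S ∧ T ≠ 0 ∧ Multiset.card T ≤ AddMonoid.exponent G ∧ T.sum = 0}

/-! Put `v = l / p`. For `g` of order `l`, the element `v • g` is killed by `p`, and `v` already
kills the cyclic factors of index `> n` (their exponents are at most `a (n + 1)`) and the
`p'`-part; so `v • g` lies in the image of a homomorphism `ι : C_p^n → G`. Given `η(C_p^n)`
such elements of `S`, the definition of `η` provides a nonempty subsequence `T` of at most `p`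
of them whose sum `σ` satisfies `v • σ = 0`. Replacing `T` by the single element `σ` keeps the
sequence zero-sum free and changes the cross number by `1 / ord σ - |T| / l ≥ 1 / v - p / l = 0`,
so by density the length cannot drop, i.e. `|T| ≤ 1`. But one element `g` with `v • g = 0`
cannot have order `l > v`. -/

theorem Multiset.exists_le_map_eq_of_le_map {α β : Type*} {f : α → β} {s : Multiset α}
    {t : Multiset β} (h : t ≤ s.map f) : ∃ u ≤ s, u.map f = t := by
  induction s using Quotient.inductionOn
  induction t using Quotient.inductionOn
  obtain ⟨w, hw, hsub⟩ := Multiset.coe_le.mp h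
  obtain ⟨x, hx, rfl⟩ := List.sublist_map_iff.mp hsub
  exact ⟨x, Multiset.coe_le.mpr hx.subperm, Quotient.sound hw⟩

section CrossNumber

variable {G : Type*} [AddCommGroup G]

@[simp]
theorem crossNum_cons (g : G) (S : Multiset G) :
    crossNum (g ::ₘ S) = (addOrderOf g : ℝ)⁻¹ + crossNum S := by
  simp [crossNum]

@[simp]
theorem crossNum_add (S T : Multiset G) : crossNum (S + T) = crossNum S + crossNum T := by
  simp [crossNum]

theorem crossNum_le_card (S : Multiset G) : crossNum S ≤ Multiset.card S := by
  induction S using Multiset.induction_on with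
  | empty => simp [crossNum]
  | cons g S ih =>
    have : (addOrderOf g : ℝ)⁻¹ ≤ 1 := by
      rcases (addOrderOf g).eq_zero_or_pos with h | h
      · simp [h]
      · exact inv_le_one_of_one_le₀ (by exact_mod_cast h)
    simp only [crossNum_cons, Multiset.card_cons, Nat.cast_add, Nat.cast_one]
    linarith

theorem crossNum_eq_card_div_of_forall_addOrderOf_eq {S : Multiset G} {l : ℕ}
    (h : ∀ g ∈ S, addOrderOf g = l) : crossNum S = Multiset.card S / l := by
  rw [crossNum, Multiset.map_congr rfl fun g hg => by rw [h g hg], Multiset.map_const',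
    Multiset.sum_replicate, nsmul_eq_mul, div_eq_mul_inv]

end CrossNumber

section ZeroSumFree

variable {G : Type*} [AddCommGroup G] [Finite G]

theorem exists_zeroSum_of_card_gt {S : Multiset G}
    (hS : Nat.card G * AddMonoid.exponent G < Multiset.card S) :
    ∃ T ≤ S, T ≠ 0 ∧ Multiset.card T ≤ AddMonoid.exponent G ∧ T.sum = 0 := by
  classical
  have : Fintype G := Fintype.ofFinite G
  obtain ⟨g, hg⟩ : ∃ g, AddMonoid.exponent G < S.count g := by
    by_contra! h
    have : Multiset.card S ≤ S.toFinset.card * AddMonoid.exponent G := by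
      rw [← Multiset.toFinset_sum_count_eq, ← smul_eq_mul]
      exact Finset.sum_le_card_nsmul _ _ _ fun g _ => h g
    have := Nat.mul_le_mul_right (AddMonoid.exponent G) S.toFinset.card_le_univ
    rw [Fintype.card_eq_nat_card] at this
    omega
  have hord : addOrderOf g ≤ AddMonoid.exponent G :=
    Nat.le_of_dvd (Nat.pos_of_ne_zero AddMonoid.exponent_ne_zero_of_finite)
      (AddMonoid.addOrder_dvd_exponent g)
  refine ⟨Multiset.replicate (addOrderOf g) g, Multiset.le_count_iff_replicate_le.mp (by omega),
    Multiset.card_pos.mp (by simpa using addOrderOf_pos g), by simpa using hord, by simp⟩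

theorem IsZeroSumFree.card_le {S : Multiset G} (hS : IsZeroSumFree S) :
    Multiset.card S ≤ Nat.card G * AddMonoid.exponent G := by
  by_contra! h
  obtain ⟨T, hTS, hT, -, hsum⟩ := exists_zeroSum_of_card_gt h
  exact hS T hTS hT hsum

theorem IsZeroSumFree.crossNum_le_littleK {S : Multiset G} (hS : IsZeroSumFree S) :
    crossNum S ≤ littleK G := by
  refine le_csSup ⟨Nat.card G * AddMonoid.exponent G, ?_⟩ ⟨S, hS, rfl⟩
  rintro _ ⟨T, hT, rfl⟩
  exact (crossNum_le_card T).trans (by exact_mod_cast hT.card_le)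

theorem exists_zeroSum_of_etaInv_le_card {S : Multiset G} (hS : etaInv G ≤ Multiset.card S) :
    ∃ T ≤ S, T ≠ 0 ∧ Multiset.card T ≤ AddMonoid.exponent G ∧ T.sum = 0 :=
  Nat.sInf_mem (s := {l : ℕ | ∀ S : Multiset G, l ≤ Multiset.card S →
      ∃ T ≤ S, T ≠ 0 ∧ Multiset.card T ≤ AddMonoid.exponent G ∧ T.sum = 0})
    ⟨_, fun _ h => exists_zeroSum_of_card_gt (Nat.lt_of_succ_le h)⟩ S hS

end ZeroSumFree

theorem IsZeroSumFree.cons_sum {G : Type*} [AddCommGroup G] {T R : Multiset G}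
    (hTR : IsZeroSumFree (T + R)) (hT : T ≠ 0) : IsZeroSumFree (T.sum ::ₘ R) := by
  classical
  intro U hU hU0 hsum
  by_cases hmem : T.sum ∈ U
  · rw [← Multiset.cons_erase hmem, Multiset.cons_le_cons_iff] at hU
    refine hTR (T + U.erase T.sum) (add_le_add_right hU T) (by simp [hT]) ?_
    rw [Multiset.sum_add, ← Multiset.sum_cons, Multiset.cons_erase hmem, hsum]
  · exact hTR U ((Multiset.le_cons_of_notMem hmem).mp hU |>.trans (Multiset.le_add_left _ _))
      hU0 hsum

theorem IsDense.card_le_one_of_crossNum_le {G : Type*} [AddCommGroup G] [Finite G]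
    {T R : Multiset G} (hTR : IsDense (T + R)) (hT : T ≠ 0)
    (h : crossNum T ≤ (addOrderOf T.sum : ℝ)⁻¹) : Multiset.card T ≤ 1 := by
  obtain ⟨hfree, hmax, hmin⟩ := hTR
  have hfree' := hfree.cons_sum hT
  have hmax' : crossNum (T.sum ::ₘ R) = littleK G := by
    refine le_antisymm hfree'.crossNum_le_littleK ?_
    rw [← hmax, crossNum_add, crossNum_cons]
    linarith
  have hcard : Multiset.card (T + R) ≤ Multiset.card (T.sum ::ₘ R) :=
    hmin ▸ Nat.sInf_le ⟨_, hfree', hmax', rfl⟩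
  rw [Multiset.card_cons, Multiset.card_add] at hcard
  omega

theorem IsDense.card_filter_addOrderOf_lt_etaInv {G H : Type*} [AddCommGroup G] [Finite G]
    [AddCommGroup H] [Finite H] {S : Multiset G} (hS : IsDense S) (ι : H →+ G) {l v : ℕ}
    (hv : 0 < v) (hvl : v < l) (hexp : AddMonoid.exponent H * v ≤ l)
    (hι : ∀ g : G, addOrderOf g = l → v • g ∈ ι.range) :
    Multiset.card (S.filter fun g => addOrderOf g = l) < etaInv H := by
  by_contra! h
  have : ∀ g, ∃ u, addOrderOf g = l → ι u = v • g := fun g => by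
    by_cases hg : addOrderOf g = l
    · exact (hι g hg).imp fun _ hu _ => hu
    · exact ⟨0, fun h => absurd h hg⟩
  choose φ hφ using this
  obtain ⟨U, hUF, hU0, hUcard, hUsum⟩ := exists_zeroSum_of_etaInv_le_card
    (S := (S.filter fun g => addOrderOf g = l).map φ) (by simpa using h)
  obtain ⟨T, hTF, rfl⟩ := Multiset.exists_le_map_eq_of_le_map hUF
  have hord : ∀ g ∈ T, addOrderOf g = l := fun g hg =>
    (Multiset.mem_filter.mp (Multiset.mem_of_le hTF hg)).2
  have hT0 : T ≠ 0 := by rintro rfl; simp at hU0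
  have hdv : addOrderOf T.sum ∣ v := by
    refine addOrderOf_dvd_of_nsmul_eq_zero ?_
    rw [Multiset.smul_sum, ← Multiset.map_congr rfl fun g hg => hφ g (hord g hg)]
    simpa [map_multiset_sum, Multiset.map_map, Function.comp_def] using congrArg ι hUsum
  have hcross : crossNum T ≤ (addOrderOf T.sum : ℝ)⁻¹ := by
    rw [Multiset.card_map] at hUcard
    have hl : (0 : ℝ) < l := by exact_mod_cast hv.trans hvl
    have hd : (0 : ℝ) < addOrderOf T.sum := by exact_mod_cast Nat.pos_of_dvd_of_pos hdv hv
    rw [crossNum_eq_card_div_of_forall_addOrderOf_eq hord, div_le_iff₀ hl, inv_mul_eq_div,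
      le_div_iff₀ hd]
    exact_mod_cast (Nat.mul_le_mul hUcard (Nat.le_of_dvd hv hdv)).trans hexp
  obtain ⟨R, rfl⟩ := Multiset.le_iff_exists_add.mp (hTF.trans (Multiset.filter_le _ _))
  obtain ⟨g, rfl⟩ : ∃ g, T = {g} := Multiset.card_eq_one.mp <| le_antisymm
    (hS.card_le_one_of_crossNum_le hT0 hcross) (Multiset.card_pos.mpr hT0)
  rw [Multiset.sum_singleton, hord g (Multiset.mem_singleton_self g)] at hdv
  exact (Nat.le_of_dvd hv hdv).not_gt hvl

namespace ZMod

def torsionHom (p m : ℕ) : ZMod p →+ ZMod (p ^ m) :=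
  lift p ⟨zmultiplesHom _ ((p ^ (m - 1) : ℕ) : ZMod (p ^ m)), by
    rw [zmultiplesHom_apply, natCast_zsmul, nsmul_eq_mul, ← Nat.cast_mul, natCast_eq_zero_iff,
      ← pow_succ']
    exact pow_dvd_pow p (by omega)⟩

theorem torsionHom_natCast (p m c : ℕ) :
    torsionHom p m c = ((c * p ^ (m - 1) : ℕ) : ZMod (p ^ m)) := by
  rw [← Int.cast_natCast, torsionHom, lift_coe, zmultiplesHom_apply, natCast_zsmul, nsmul_eq_mul,
    Nat.cast_mul]

theorem exists_torsionHom_eq {p m : ℕ} [NeZero p] {x : ZMod (p ^ m)} (hx : p • x = 0) :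
    ∃ u, torsionHom p m u = x := by
  obtain ⟨c, hc⟩ : p ^ (m - 1) ∣ x.val := by
    rcases m with _ | m
    · simp
    · rw [← natCast_zmod_val x, nsmul_eq_mul, ← Nat.cast_mul, natCast_eq_zero_iff] at hx
      exact (Nat.mul_dvd_mul_iff_left (NeZero.pos p)).mp ((pow_succ' p m).symm.dvd.trans hx)
  exact ⟨c, by rw [torsionHom_natCast, mul_comm, ← hc, natCast_zmod_val]⟩

end ZMod

theorem exists_addMonoidHom_pi_zmod_mem_range {k : ℕ} (p n : ℕ) [NeZero p] (b : Fin k → ℕ) :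
    ∃ ι : (Fin n → ZMod p) →+ ∀ j : Fin k, ZMod (p ^ b j),
      ∀ x, p • x = 0 → (∀ j : Fin k, n ≤ j → x j = 0) → x ∈ ι.range := by
  refine ⟨AddMonoidHom.pi fun j => if hj : (j : ℕ) < n then
    (ZMod.torsionHom p (b j)).comp (Pi.evalAddMonoidHom _ ⟨j, hj⟩) else 0, fun x hx hxn => ?_⟩
  choose c hc using fun j => ZMod.exists_torsionHom_eq (by simpa using congrFun hx j)
  refine ⟨fun i => if hi : (i : ℕ) < k then c ⟨i, hi⟩ else 0, funext fun j => ?_⟩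
  by_cases hj : (j : ℕ) < n
  · simp [hj, hc]
  · simp [hj, hxn j (not_lt.mp hj)]

theorem nsmul_eq_zero_of_mul_nsmul_eq_zero {G : Type*} [AddGroup G] [Finite G] {p : ℕ}
    (hp : p.Prime) (hG : ¬ p ∣ Nat.card G) {v : ℕ} {y : G} (h : (p * v) • y = 0) :
    v • y = 0 := by
  refine addOrderOf_dvd_iff_nsmul_eq_zero.mp (Nat.Coprime.dvd_of_dvd_mul_left ?_
    (addOrderOf_dvd_of_nsmul_eq_zero h))
  exact ((hp.coprime_iff_not_dvd.mpr hG).coprime_dvd_right (addOrderOf_dvd_natCard y)).symm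

theorem exists_addMonoidHom_nsmul_mem_range {G G' : Type*} [AddCommGroup G] [AddCommGroup G']
    [Finite G'] {k p : ℕ} (hp : p.Prime) (hG' : ¬ p ∣ Nat.card G') {b : Fin k → ℕ}
    (e : G ≃+ (∀ j : Fin k, ZMod (p ^ b j)) × G') {n v : ℕ}
    (hb : ∀ j : Fin k, n ≤ j → p ^ b j ∣ v) :
    ∃ ι : (Fin n → ZMod p) →+ G, ∀ g : G, (p * v) • g = 0 → v • g ∈ ι.range := by
  have : NeZero p := ⟨hp.ne_zero⟩
  obtain ⟨ι, hι⟩ := exists_addMonoidHom_pi_zmod_mem_range p n b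
  refine ⟨e.symm.toAddMonoidHom.comp ((AddMonoidHom.inl _ _).comp ι), fun g hg => ?_⟩
  have hg' : (p * v) • e g = 0 := by rw [← map_nsmul, hg, map_zero]
  obtain ⟨u, hu⟩ := hι (v • (e g).1) (by rw [smul_smul]; exact congrArg Prod.fst hg')
    fun j hj => by simp [nsmul_eq_mul, (ZMod.natCast_eq_zero_iff _ _).mpr (hb j hj)]
  refine ⟨u, e.injective (Prod.ext ?_ ?_)⟩
  · simp [hu]
  · simpa using (nsmul_eq_zero_of_mul_nsmul_eq_zero hp hG' (congrArg Prod.snd hg')).symm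

theorem n_amalgamation_lemma_general
    (G : Type*) [AddCommGroup G] [Finite G] (p : ℕ) (hp : p.Prime)
    (k : ℕ) (a : ℕ → ℕ)
    (hanti : ∀ i j : ℕ, 1 ≤ i → i ≤ j → a j ≤ a i)
    (G' : Type*) [AddCommGroup G'] [Finite G'] (hG' : ¬ p ∣ Nat.card G')
    (e : G ≃+ (∀ j : Fin k, ZMod (p ^ a (j.1 + 1))) × G')
    (n : ℕ)
    (l : ℕ) (hl : 0 < l) (hldvd : p ^ (a (n + 1) + 1) ∣ l)
    (S : Multiset G) (hS : IsDense S) :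
    Multiset.card (S.filter fun g => addOrderOf g = l) ≤ etaInv (Fin n → ZMod p) - 1 := by
  have : NeZero p := ⟨hp.ne_zero⟩
  obtain ⟨v, rfl⟩ : p ∣ l := (dvd_pow_self p (Nat.succ_ne_zero _)).trans hldvd
  have hv : 0 < v := Nat.pos_of_mul_pos_left hl
  have hpv : p ^ a (n + 1) ∣ v := (Nat.mul_dvd_mul_iff_left hp.pos).mp (pow_succ' p _ ▸ hldvd)
  obtain ⟨ι, hι⟩ := exists_addMonoidHom_nsmul_mem_range hp hG' (b := fun j => a (j.1 + 1)) e
    (n := n) fun j hj => (pow_dvd_pow p (hanti (n + 1) (j + 1) (by omega) (by omega))).trans hpv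
  have hexp : AddMonoid.exponent (Fin n → ZMod p) ∣ p :=
    AddMonoid.exponent_dvd_iff_forall_nsmul_eq_zero.mpr fun x => funext fun i => by simp
  refine Nat.le_sub_one_of_lt (hS.card_filter_addOrderOf_lt_etaInv ι hv
    (lt_mul_left hv hp.one_lt) (Nat.mul_le_mul_right v (Nat.le_of_dvd hp.pos hexp))
    fun g hg => hι g (hg ▸ addOrderOf_nsmul_eq_zero g))

/-- (n-Amalgamation lemma) Let `p` be a prime dividing `|G|`, and write the `p`-Sylow
subgroup of `G` as `C_{p^{a_1}} ⊕ ⋯ ⊕ C_{p^{a_k}}` with `a_1 ≥ ⋯ ≥ a_k ≥ 1` (and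
`a_j = 0` for `j > k`), i.e. `G ≅ (⨁_{j=1}^k C_{p^{a_j}}) ⊕ G'` with `p ∤ |G'|`.
Suppose `a_n > a_{n+1}` and `p^{a_{n+1}+1} ∣ l`. Then a dense zero-sum free sequence
`S` over `G` contains at most `η(C_p^n) - 1` elements of order `l`. -/
theorem n_amalgamation_lemma
    (G : Type*) [AddCommGroup G] [Finite G] (p : ℕ) (hp : p.Prime)
    (hpG : p ∣ Nat.card G)
    (k : ℕ) (a : ℕ → ℕ)
    (hanti : ∀ i j : ℕ, 1 ≤ i → i ≤ j → a j ≤ a i)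
    (hpos : ∀ j : ℕ, 1 ≤ j → j ≤ k → 1 ≤ a j)
    (hzero : ∀ j : ℕ, k < j → a j = 0)
    (G' : Type*) [AddCommGroup G'] [Finite G'] (hG' : ¬ p ∣ Nat.card G')
    (e : G ≃+ (∀ j : Fin k, ZMod (p ^ a (j.1 + 1))) × G')
    (n : ℕ) (hn : 0 < n) (hgap : a (n + 1) < a n)
    (l : ℕ) (hl : 0 < l) (hldvd : p ^ (a (n + 1) + 1) ∣ l)
    (S : Multiset G) (hS : IsDense S) :
    Multiset.card (S.filter fun g => addOrderOf g = l) ≤ etaInv (Fin n → ZMod p) - 1 :=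
  n_amalgamation_lemma_general G p hp k a hanti G' hG' e n l hl hldvd S hS
end

section
/- Let p be a prime, n a positive integer, and t_1, …, t_n ∈ ℚ. Define s_1, …, s_n by s_1 = t_1 and s_i = {s_{i−1}} + t_i for i ≥ 2, where {x} = x − ⌊x⌋ denotes the fractional part. Suppose b is a positive integer with b·s_i ∈ ℤ and b·t_i ∈ ℤ for all i. Then Σ_{i=1}^n ⌊s_i⌋/p^i ≥ Σ_{i=1}^n t_i/p^i + (1/p)(1/b − 1), with equality if and only if s_i + 1/b ∈ ℤ for all i ∈ [1, n]. -/
/-!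
Write `f i = {s i}`. The recurrence says `⌊s i⌋ = t i + f (i - 1) - f i` (with `f 0 = 0`), so after
summation by parts the difference of the two sides of the inequality becomes a combination of the
defects `(1 - 1/b) - f i` with the positive weights `1/p^n` and `(p - 1)/p^(i+1)`, `i < n`, which
add up to `1/p`. Since `b * f i` is an integer below `b`, every defect is nonnegative, and it
vanishes exactly when `s i + 1/b` is an integer.
-/

open Finset

section

variable {K : Type*} [Field K]

def weightedSum (q : K) (n : ℕ) (d : ℕ → K) : K :=
  d (n + 1) / q ^ (n + 1) + ∑ i ∈ Icc 1 n, d i * (q - 1) / q ^ (i + 1)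

theorem weightedSum_congr {q : K} {n : ℕ} {d d' : ℕ → K} (h : ∀ i ∈ Icc 1 (n + 1), d i = d' i) :
    weightedSum q n d = weightedSum q n d' := by
  unfold weightedSum
  rw [h (n + 1) (by simp)]
  congr 1
  exact sum_congr rfl fun i hi => by rw [h i (by simp at hi ⊢; omega)]

theorem sum_sub_div_pow_add_div_eq_weightedSum {q : K} (hq : q ≠ 0) (g : ℕ → K) (n : ℕ) :
    ∑ i ∈ Icc 1 (n + 1), (g i - g (i - 1)) / q ^ i + g 0 / q = weightedSum q n g := by
  induction n with
  | zero => simp only [weightedSum, zero_add, Icc_self, sum_singleton, Icc_eq_empty_of_lt,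
      Nat.lt_add_one, sum_empty, Nat.sub_self, pow_one, add_zero]; ring
  | succ n ih =>
    rw [sum_Icc_succ_top (by omega), add_right_comm, ih, weightedSum, weightedSum,
      sum_Icc_succ_top (by omega), Nat.add_sub_cancel]
    generalize ∑ i ∈ Icc 1 n, g i * (q - 1) / q ^ (i + 1) = S
    field_simp
    ring

variable [LinearOrder K]

theorem sum_floor_div_pow_sub_eq_weightedSum [FloorRing K] {q : K} (hq : q ≠ 0) (a : K) {n : ℕ}
    {s t : ℕ → K} (hs1 : s 1 = t 1)
    (hrec : ∀ i, 2 ≤ i → i ≤ n + 1 → s i = Int.fract (s (i - 1)) + t i) :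
    ∑ i ∈ Icc 1 (n + 1), (⌊s i⌋ : K) / q ^ i - (∑ i ∈ Icc 1 (n + 1), t i / q ^ i - a / q) =
      weightedSum q n (fun i => a - Int.fract (s i)) := by
  -- `g 0 = a` is the defect of the fractional part `0` carried into the first step
  set g : ℕ → K := fun i => if i = 0 then a else a - Int.fract (s i)
  have hfloor : ∀ i ∈ Icc 1 (n + 1),
      (⌊s i⌋ : K) / q ^ i = t i / q ^ i + (g i - g (i - 1)) / q ^ i := by
    intro i hi
    rw [mem_Icc] at hi
    rw [← add_div, ← Int.self_sub_fract]
    rcases eq_or_lt_of_le hi.1 with rfl | h2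
    · simp only [g, hs1, one_ne_zero, if_false, if_true, Nat.sub_self]
      ring
    · simp only [g, if_neg (by omega : i ≠ 0), if_neg (by omega : i - 1 ≠ 0)]
      rw [hrec i h2 hi.2]
      ring
  rw [sum_congr rfl hfloor, sum_add_distrib, sub_sub_eq_add_sub, add_assoc, add_sub_cancel_left,
    show a = g 0 from rfl, sum_sub_div_pow_add_div_eq_weightedSum hq]
  exact weightedSum_congr fun i hi => if_neg (by rw [mem_Icc] at hi; omega)

variable [IsStrictOrderedRing K]

theorem weightedSum_nonneg {q : K} (hq : 1 < q) {n : ℕ} {d : ℕ → K}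
    (hd : ∀ i ∈ Icc 1 (n + 1), 0 ≤ d i) : 0 ≤ weightedSum q n d := by
  have hq0 : 0 < q := zero_lt_one.trans hq
  refine add_nonneg (div_nonneg (hd _ (by simp)) (by positivity)) (sum_nonneg fun i hi => ?_)
  have := hd i (by simp at hi ⊢; omega)
  have : 0 ≤ q - 1 := by linarith
  positivity

theorem weightedSum_eq_zero_iff {q : K} (hq : 1 < q) {n : ℕ} {d : ℕ → K}
    (hd : ∀ i ∈ Icc 1 (n + 1), 0 ≤ d i) :
    weightedSum q n d = 0 ↔ ∀ i ∈ Icc 1 (n + 1), d i = 0 := by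
  have hq0 : 0 < q := zero_lt_one.trans hq
  have hterm : ∀ i ∈ Icc 1 n, 0 ≤ d i * (q - 1) / q ^ (i + 1) := fun i hi => by
    have := hd i (by simp at hi ⊢; omega)
    have : 0 ≤ q - 1 := by linarith
    positivity
  rw [weightedSum, add_eq_zero_iff_of_nonneg (div_nonneg (hd _ (by simp)) (by positivity))
    (sum_nonneg hterm), sum_eq_zero_iff_of_nonneg hterm]
  simp only [div_eq_zero_iff, mul_eq_zero, pow_eq_zero_iff', hq0.ne', sub_eq_zero, hq.ne',
    false_and, or_false]
  constructor
  · rintro ⟨htop, hlow⟩ i hi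
    rcases eq_or_ne i (n + 1) with rfl | hne
    · exact htop
    · exact hlow i (by simp at hi ⊢; omega)
  · intro h
    exact ⟨h _ (by simp), fun i hi => h i (by simp at hi ⊢; omega)⟩

variable [FloorRing K]

theorem Int.fract_le_one_sub_inv_of_mul_eq_intCast {b : ℕ} (hb : 0 < b) {x : K} {z : ℤ}
    (hz : (b : K) * x = z) : Int.fract x ≤ 1 - (b : K)⁻¹ := by
  have hbK : (0 : K) < b := by exact_mod_cast hb
  have hint : (b : K) * Int.fract x = ((z - b * ⌊x⌋ : ℤ) : K) := by
    rw [Int.fract]; push_cast; rw [← hz]; ring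
  have hlt : z - b * ⌊x⌋ < b := by
    have := mul_lt_mul_of_pos_left (Int.fract_lt_one x) hbK
    rw [hint, mul_one] at this
    exact_mod_cast this
  have hle : (b : K) * Int.fract x ≤ b - 1 := by
    rw [hint]; exact_mod_cast Int.le_sub_one_of_lt hlt
  rw [le_sub_iff_add_le, ← mul_le_mul_iff_of_pos_left hbK, mul_add, mul_inv_cancel₀ hbK.ne']
  linarith

theorem Int.fract_eq_one_sub_iff {ε x : K} (hε0 : 0 < ε) (hε1 : ε ≤ 1) :
    Int.fract x = 1 - ε ↔ ∃ z : ℤ, x + ε = z := by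
  rw [Int.fract_eq_iff]
  simp only [sub_nonneg, hε1, sub_lt_self_iff, hε0, true_and]
  constructor
  · rintro ⟨z, hz⟩
    exact ⟨z + 1, by push_cast; rw [← hz]; ring⟩
  · rintro ⟨z, hz⟩
    exact ⟨z - 1, by push_cast; rw [← hz]; ring⟩

end

theorem floor_sum_lemma_one_general
    (p : ℕ) (hp : p.Prime) (n : ℕ) (hn : 0 < n) (t s : ℕ → ℚ)
    (hs1 : s 1 = t 1)
    (hrec : ∀ i : ℕ, 2 ≤ i → i ≤ n → s i = Int.fract (s (i - 1)) + t i)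
    (b : ℕ) (hb : 0 < b)
    (hsb : ∀ i : ℕ, 1 ≤ i → i ≤ n → ∃ z : ℤ, (b : ℚ) * s i = z) :
    (∑ i ∈ Finset.Icc 1 n, (⌊s i⌋ : ℚ) / (p : ℚ) ^ i)
        ≥ (∑ i ∈ Finset.Icc 1 n, t i / (p : ℚ) ^ i) + (1 / p) * (1 / b - 1)
      ∧ ((∑ i ∈ Finset.Icc 1 n, (⌊s i⌋ : ℚ) / (p : ℚ) ^ i)
            = (∑ i ∈ Finset.Icc 1 n, t i / (p : ℚ) ^ i) + (1 / p) * (1 / b - 1)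
          ↔ ∀ i : ℕ, 1 ≤ i → i ≤ n → ∃ z : ℤ, s i + 1 / b = z) := by
  obtain ⟨n, rfl⟩ := Nat.exists_eq_add_one_of_ne_zero hn.ne'
  have hp1 : (1 : ℚ) < p := by exact_mod_cast hp.one_lt
  have hb1 : (1 : ℚ) ≤ b := by exact_mod_cast hb
  set d : ℕ → ℚ := fun i => 1 - 1 / b - Int.fract (s i)
  have hd : ∀ i ∈ Icc 1 (n + 1), 0 ≤ d i := fun i hi => by
    rw [mem_Icc] at hi
    obtain ⟨z, hz⟩ := hsb i hi.1 hi.2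
    simpa [d, one_div] using Int.fract_le_one_sub_inv_of_mul_eq_intCast hb hz
  have hd0 : ∀ i, d i = 0 ↔ ∃ z : ℤ, s i + 1 / b = z := fun i => by
    rw [sub_eq_zero, eq_comm,
      Int.fract_eq_one_sub_iff (by positivity) (div_le_one_of_le₀ hb1 (by positivity))]
  have key := sum_floor_div_pow_sub_eq_weightedSum (q := (p : ℚ)) (by positivity)
    (1 - 1 / b : ℚ) hs1 hrec
  rw [show (1 / p : ℚ) * (1 / b - 1) = -((1 - 1 / b) / p) by ring, ← sub_eq_add_neg]
  refine ⟨sub_nonneg.1 (key ▸ weightedSum_nonneg hp1 hd), ?_⟩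
  rw [← sub_eq_zero, key, weightedSum_eq_zero_iff hp1 hd]
  simp only [hd0, mem_Icc, and_imp]

/-- Let `p` be a prime, `n ≥ 1`, and `t_1, …, t_n ∈ ℚ`. Define `s_1 = t_1` and
`s_i = {s_{i-1}} + t_i` for `2 ≤ i ≤ n`, where `{x}` is the fractional part. If `b` is
a positive integer with `b·s_i ∈ ℤ` and `b·t_i ∈ ℤ` for all `i ∈ [1, n]`, then
`∑_{i=1}^n ⌊s_i⌋/p^i ≥ ∑_{i=1}^n t_i/p^i + (1/p)(1/b - 1)`, with equality if and only
if `s_i + 1/b ∈ ℤ` for all `i ∈ [1, n]`. -/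
theorem floor_sum_lemma_one
    (p : ℕ) (hp : p.Prime) (n : ℕ) (hn : 0 < n) (t s : ℕ → ℚ)
    (hs1 : s 1 = t 1)
    (hrec : ∀ i : ℕ, 2 ≤ i → i ≤ n → s i = Int.fract (s (i - 1)) + t i)
    (b : ℕ) (hb : 0 < b)
    (hsb : ∀ i : ℕ, 1 ≤ i → i ≤ n → ∃ z : ℤ, (b : ℚ) * s i = z)
    (htb : ∀ i : ℕ, 1 ≤ i → i ≤ n → ∃ z : ℤ, (b : ℚ) * t i = z) :
    (∑ i ∈ Finset.Icc 1 n, (⌊s i⌋ : ℚ) / (p : ℚ) ^ i)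
        ≥ (∑ i ∈ Finset.Icc 1 n, t i / (p : ℚ) ^ i) + (1 / p) * (1 / b - 1)
      ∧ ((∑ i ∈ Finset.Icc 1 n, (⌊s i⌋ : ℚ) / (p : ℚ) ^ i)
            = (∑ i ∈ Finset.Icc 1 n, t i / (p : ℚ) ^ i) + (1 / p) * (1 / b - 1)
          ↔ ∀ i : ℕ, 1 ≤ i → i ≤ n → ∃ z : ℤ, s i + 1 / b = z) :=
  floor_sum_lemma_one_general p hp n hn t s hs1 hrec b hb hsb
end

section
/- Let G₁ and G₂ be finite abelian groups, G = G₁ ⊕ G₂, and let S be a zero-sum free sequence over G. Let T be a subsequence of S such that the set of subsums Σ(T) contains every element of (G₁ ∖ {0}) ⊕ {0}. Then no nonempty subsequence of S·T^{−1} has sum lying in G₁ ⊕ {0}; equivalently, the image of S·T^{−1} under the projection π: G → G₂ is a zero-sum free sequence over G₂. In particular k(S·T^{−1}) ≤ k(π(S·T^{−1})) ≤ k(G₂). -/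
/-- The set of subsums of a sequence `S`: sums of nonempty sub-multisets of `S`. -/
def subsums {G : Type*} [AddCommGroup G] (S : Multiset G) : Set G :=
  {x | ∃ T : Multiset G, T ≤ S ∧ T ≠ 0 ∧ T.sum = x}

theorem isZeroSumFree_map_iff {G H : Type*} [AddCommGroup G] [AddCommGroup H] (f : G →+ H)
    (S : Multiset G) : IsZeroSumFree (S.map f) ↔ ∀ W ≤ S, W ≠ 0 → f W.sum ≠ 0 := by
  constructor
  · intro hS W hW hW0 hsum
    exact hS (W.map f) (Multiset.map_le_map hW) (by simpa using hW0)
      (by rwa [← map_multiset_sum])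
  · intro hS V hV hV0
    obtain ⟨W, hW, rfl⟩ := Multiset.exists_le_map_eq_of_le_map hV
    rw [← map_multiset_sum]
    exact hS W hW (by simpa using hV0)

theorem inv_addOrderOf_le_inv_addOrderOf_map {G H : Type*} [AddCommGroup G] [AddCommGroup H]
    (f : G →+ H) (g : G) : (addOrderOf g : ℝ)⁻¹ ≤ (addOrderOf (f g) : ℝ)⁻¹ := by
  rcases (addOrderOf g).eq_zero_or_pos with hg | hg
  · rw [hg, Nat.cast_zero, inv_zero]
    positivity
  · have hdvd : addOrderOf (f g) ∣ addOrderOf g := addOrderOf_map_dvd f g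
    have hfg : 0 < addOrderOf (f g) := Nat.pos_of_dvd_of_pos hdvd hg
    exact inv_anti₀ (by exact_mod_cast hfg) (by exact_mod_cast Nat.le_of_dvd hg hdvd)

theorem crossNum_le_crossNum_map {G H : Type*} [AddCommGroup G] [AddCommGroup H] (f : G →+ H)
    (S : Multiset G) : crossNum S ≤ crossNum (S.map f) := by
  rw [crossNum, crossNum, Multiset.map_map]
  exact Multiset.sum_map_le_sum_map _ _ fun g _ => inv_addOrderOf_le_inv_addOrderOf_map f g

namespace IsZeroSumFree

variable {G : Type*} [AddCommGroup G] {S : Multiset G}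

theorem count_lt_addOrderOf [DecidableEq G] (hS : IsZeroSumFree S) {g : G}
    (hg : IsOfFinAddOrder g) : S.count g < addOrderOf g := by
  by_contra! hle
  refine hS _ (Multiset.le_count_iff_replicate_le.1 hle) ?_ (by simp [addOrderOf_nsmul_eq_zero])
  rw [← Multiset.card_pos, Multiset.card_replicate]
  exact hg.addOrderOf_pos

theorem crossNum_le_card [Fintype G] (hS : IsZeroSumFree S) : crossNum S ≤ Fintype.card G := by
  classical
  calc crossNum S = ∑ g ∈ S.toFinset, (S.count g : ℝ) / addOrderOf g := by
        rw [crossNum, Finset.sum_multiset_map_count]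
        simp [div_eq_mul_inv]
    _ ≤ ∑ _g ∈ S.toFinset, (1 : ℝ) := Finset.sum_le_sum fun g _ => by
        have hlt := hS.count_lt_addOrderOf (isOfFinAddOrder_of_finite g)
        exact div_le_one_of_le₀ (by exact_mod_cast hlt.le) (Nat.cast_nonneg _)
    _ ≤ Fintype.card G := by
        simpa using S.toFinset.card_le_univ

theorem crossNum_le_littleK_s18 [Finite G] (hS : IsZeroSumFree S) : crossNum S ≤ littleK G := by
  have := Fintype.ofFinite G
  refine le_csSup ⟨Fintype.card G, ?_⟩ ⟨S, hS, rfl⟩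
  rintro _ ⟨S', hS', rfl⟩
  exact hS'.crossNum_le_card

theorem neg_sum_notMem_subsums [DecidableEq G] (hS : IsZeroSumFree S) {T W : Multiset G}
    (hT : T ≤ S) (hW : W ≤ S - T) : -W.sum ∉ subsums T := by
  rintro ⟨U, hUT, hU0, hUsum⟩
  refine hS (W + U) ?_ (by simp [hU0]) (by rw [Multiset.sum_add, hUsum, add_neg_cancel])
  calc W + U ≤ S - T + T := add_le_add hW hUT
    _ = S := tsub_add_cancel_of_le hT

end IsZeroSumFree

theorem projection_zero_sum_free_of_subsums_cover_general
    (G₁ G₂ : Type*) [AddCommGroup G₁] [AddCommGroup G₂] [Finite G₂]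
    [DecidableEq G₁] [DecidableEq G₂]
    (S : Multiset (G₁ × G₂)) (hS : IsZeroSumFree S)
    (T : Multiset (G₁ × G₂)) (hT : T ≤ S)
    (hcover : ∀ g : G₁, g ≠ 0 → ((g, 0) : G₁ × G₂) ∈ subsums T) :
    (∀ W : Multiset (G₁ × G₂), W ≤ S - T → W ≠ 0 → W.sum.2 ≠ 0) ∧
      IsZeroSumFree ((S - T).map Prod.snd) ∧
      crossNum (S - T) ≤ crossNum ((S - T).map Prod.snd) ∧
      crossNum ((S - T).map Prod.snd) ≤ littleK G₂ := by
  have hproj : ∀ W : Multiset (G₁ × G₂), W ≤ S - T → W ≠ 0 → W.sum.2 ≠ 0 := by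
    intro W hW hW0 hW2
    have hW1 : W.sum.1 ≠ 0 := fun hW1 =>
      hS W (hW.trans (Multiset.sub_le_self S T)) hW0 (Prod.ext hW1 hW2)
    apply hS.neg_sum_notMem_subsums hT hW
    convert hcover _ (neg_ne_zero.2 hW1) using 1
    ext <;> simp [hW2]
  have hfree : IsZeroSumFree ((S - T).map Prod.snd) :=
    (isZeroSumFree_map_iff (AddMonoidHom.snd G₁ G₂) _).2 hproj
  exact ⟨hproj, hfree, crossNum_le_crossNum_map (AddMonoidHom.snd G₁ G₂) _,
    hfree.crossNum_le_littleK_s18⟩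

/-- Let `G = G₁ ⊕ G₂` and `S` a zero-sum free sequence over `G`. If `T` is a
subsequence of `S` whose set of subsums contains all of `(G₁ ∖ {0}) ⊕ {0}`, then no
nonempty subsequence of `S·T⁻¹` has sum in `G₁ ⊕ {0}`; equivalently the image of
`S·T⁻¹` under the projection to `G₂` is zero-sum free over `G₂`. In particular
`k(S·T⁻¹) ≤ k(π(S·T⁻¹)) ≤ k(G₂)`. -/
theorem projection_zero_sum_free_of_subsums_cover
    (G₁ G₂ : Type*) [AddCommGroup G₁] [AddCommGroup G₂] [Finite G₁] [Finite G₂]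
    [DecidableEq G₁] [DecidableEq G₂]
    (S : Multiset (G₁ × G₂)) (hS : IsZeroSumFree S)
    (T : Multiset (G₁ × G₂)) (hT : T ≤ S)
    (hcover : ∀ g : G₁, g ≠ 0 → ((g, 0) : G₁ × G₂) ∈ subsums T) :
    (∀ W : Multiset (G₁ × G₂), W ≤ S - T → W ≠ 0 → W.sum.2 ≠ 0) ∧
      IsZeroSumFree ((S - T).map Prod.snd) ∧
      crossNum (S - T) ≤ crossNum ((S - T).map Prod.snd) ∧
      crossNum ((S - T).map Prod.snd) ≤ littleK G₂ :=
  projection_zero_sum_free_of_subsums_cover_general G₁ G₂ S hS T hT hcover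
end

section
/- Let q be a prime and m a positive integer. Every sequence S over the cyclic group C_{q^m} contains at least ⌊k(S)⌋ pairwise disjoint nonempty zero-sum subsequences; in particular, every sequence S over C_{q^m} with k(S) ≥ 1 has a nonempty zero-sum subsequence T with k(T) ≤ 1. -/
/-!
Write `N = q^m` and give `g : ZMod N` the weight `N / ord g = gcd(N, g)`, a power of `q`; then
`k(S)` is the total weight of `S` divided by `N`. A zero-sum free `S` has total weight `< N`:
otherwise some weight `q^j < N` occurs at least `q` times, Davenport's bound for `C_q` (applied to
`g / q^j`) yields at most `q` of these elements whose sum has weight divisible by `q^(j+1)`, and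
replacing them by their sum gives a shorter zero-sum free sequence of no smaller total weight.
A minimal `T ≤ S` of total weight `≥ N` then has weight exactly `N`, since all weights are
multiples of the smallest one, so it is not zero-sum free and contains a zero-sum `U` with
`k(U) ≤ 1`. Removing such blocks greedily gives `⌊k(S)⌋` disjoint zero-sum subsequences.
-/

open Multiset

section Davenport

variable {α G : Type*} [AddCommGroup G] [Fintype G]

theorem List.exists_sublist_map_sum_eq_zero (l : List α) (φ : α → G)
    (hl : Fintype.card G ≤ l.length) :
    ∃ U, U.Sublist l ∧ U ≠ [] ∧ U.length ≤ Fintype.card G ∧ (U.map φ).sum = 0 := by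
  have hcard : Fintype.card G < Fintype.card (Fin (Fintype.card G + 1)) := by simp
  obtain ⟨i, j, hij, heq⟩ := Fintype.exists_ne_map_eq_of_card_lt
    (fun i : Fin (Fintype.card G + 1) => ((l.take i).map φ).sum) hcard
  wlog hlt : i < j generalizing i j
  · exact this j i hij.symm heq.symm (lt_of_le_of_ne (not_lt.mp hlt) hij.symm)
  have hi : (i : ℕ) < j := hlt
  have hj := j.isLt
  refine ⟨(l.drop i).take (j - i),
    (List.take_sublist _ _).trans (List.drop_sublist _ _), ?_, ?_, ?_⟩
  · rw [← List.length_pos_iff, List.length_take, List.length_drop]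
    omega
  · rw [List.length_take]
    omega
  · have hsplit : l.take j = l.take i ++ (l.drop i).take (j - i) := by
      rw [← List.take_add]
      congr
      omega
    simp only [hsplit, List.map_append, List.sum_append] at heq
    exact left_eq_add.mp heq

theorem Multiset.exists_le_map_sum_eq_zero (S : Multiset α) (φ : α → G)
    (hS : Fintype.card G ≤ card S) :
    ∃ T ≤ S, T ≠ 0 ∧ card T ≤ Fintype.card G ∧ (T.map φ).sum = 0 := by
  induction S using Quotient.inductionOn with
  | h l =>
    obtain ⟨U, hU, hU0, hlen, hsum⟩ := l.exists_sublist_map_sum_eq_zero φ hS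
    exact ⟨U, coe_le.mpr hU.subperm, by simpa using hU0, hlen, by simpa using hsum⟩

end Davenport

theorem IsZeroSumFree.ne_zero_of_mem {G : Type*} [AddCommGroup G] {S : Multiset G}
    (hS : IsZeroSumFree S) {g : G} (hg : g ∈ S) : g ≠ 0 := fun h0 =>
  hS {g} (singleton_le.mpr hg) (singleton_ne_zero g) (by simp [h0])

theorem IsZeroSumFree.cons_sum_tsub {G : Type*} [AddCommGroup G] [DecidableEq G]
    {S U : Multiset G} (hS : IsZeroSumFree S) (hUS : U ≤ S) (hU0 : U ≠ 0) :
    IsZeroSumFree (U.sum ::ₘ (S - U)) := by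
  intro T hT hT0 hTsum
  by_cases hu : U.sum ∈ T
  · refine hS (T.erase U.sum + U) ?_ (by simp [hU0]) ?_
    · calc T.erase U.sum + U ≤ S - U + U := add_le_add_left (erase_le_iff_le_cons.mpr hT) U
        _ = S := tsub_add_cancel_of_le hUS
    · rw [sum_add, add_comm, sum_erase hu, hTsum]
  · exact hS T (((le_cons_of_notMem hu).mp hT).trans tsub_le_self) hT0 hTsum

theorem Multiset.sum_lt_pow_of_count_pow_lt {q m : ℕ} (hq : 1 < q) (M : Multiset ℕ)
    (hM : ∀ x ∈ M, ∃ j < m, q ^ j = x) (hcount : ∀ j < m, M.count (q ^ j) < q) :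
    M.sum < q ^ m := by
  classical
  have hsub : M.toFinset ⊆ (Finset.range m).image (q ^ ·) := fun x hx => by
    obtain ⟨j, hj, rfl⟩ := hM x (mem_toFinset.mp hx)
    exact Finset.mem_image_of_mem _ (Finset.mem_range.mpr hj)
  calc M.sum = ∑ x ∈ (Finset.range m).image (q ^ ·), M.count x • x :=
        Finset.sum_multiset_count_of_subset M _ hsub
    _ ≤ ∑ x ∈ (Finset.range m).image (q ^ ·), (q - 1) * x := by
        refine Finset.sum_le_sum fun x hx => ?_
        obtain ⟨j, hj, rfl⟩ := Finset.mem_image.mp hx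
        exact Nat.mul_le_mul_right _ (Nat.le_sub_one_of_lt (hcount j (Finset.mem_range.mp hj)))
    _ = (∑ j ∈ Finset.range m, q ^ j) * (q - 1) := by
        rw [Finset.sum_image fun a _ b _ h => Nat.pow_right_injective hq h, Finset.sum_mul]
        simp only [mul_comm]
    _ = q ^ m - 1 := geom_sum_mul_of_one_le hq.le m
    _ < q ^ m := Nat.sub_lt (Nat.pow_pos (by omega)) one_pos

theorem Nat.eq_of_dvd_of_le_of_lt_add {a b d : ℕ} (ha : d ∣ a) (hb : d ∣ b) (hba : b ≤ a)
    (hab : a < b + d) : a = b := by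
  have := Nat.eq_zero_of_dvd_of_lt (Nat.dvd_sub ha hb) (by omega)
  omega

namespace CrossNumber

section Weight

variable {N : ℕ}

/-- `N / addOrderOf g` (see `inv_addOrderOf_eq_weight_div`), written as a gcd so that its divisors
are visible. -/
def weight (g : ZMod N) : ℕ := N.gcd g.val

def totalWeight (S : Multiset (ZMod N)) : ℕ := (S.map weight).sum

theorem weight_dvd (g : ZMod N) : weight g ∣ N := Nat.gcd_dvd_left _ _

theorem dvd_weight_iff {d : ℕ} (hd : d ∣ N) {g : ZMod N} : d ∣ weight g ↔ d ∣ g.val :=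
  Nat.dvd_gcd_iff.trans (and_iff_right hd)

@[simp] theorem totalWeight_add (A B : Multiset (ZMod N)) :
    totalWeight (A + B) = totalWeight A + totalWeight B := by
  simp [totalWeight]

@[simp] theorem totalWeight_cons (g : ZMod N) (A : Multiset (ZMod N)) :
    totalWeight (g ::ₘ A) = weight g + totalWeight A := by
  simp [totalWeight]

theorem totalWeight_mono {A B : Multiset (ZMod N)} (h : A ≤ B) :
    totalWeight A ≤ totalWeight B := by
  obtain ⟨C, rfl⟩ := Multiset.le_iff_exists_add.mp h
  simp

variable [NeZero N]

theorem weight_pos (g : ZMod N) : 0 < weight g :=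
  Nat.gcd_pos_of_pos_left _ (NeZero.pos N)

theorem inv_addOrderOf_eq_weight_div (g : ZMod N) :
    (addOrderOf g : ℝ)⁻¹ = weight g / N := by
  have hord : addOrderOf g = N / weight g := by
    conv_lhs => rw [← ZMod.natCast_zmod_val g]
    exact ZMod.addOrderOf_coe _ (NeZero.ne N)
  rw [hord, Nat.cast_div (weight_dvd g) (by exact_mod_cast (weight_pos g).ne'), inv_div]

theorem crossNum_eq_totalWeight_div (S : Multiset (ZMod N)) :
    crossNum S = totalWeight S / N := by
  simp only [crossNum, inv_addOrderOf_eq_weight_div, sum_map_div, totalWeight,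
    Nat.cast_multiset_sum, map_map, Function.comp_def]

theorem dvd_val_sum {c k : ℕ} (hN : c * k ∣ N) (U : Multiset (ZMod N))
    (hc : ∀ g ∈ U, c ∣ g.val) (hk : (U.map fun g => ((g.val / c : ℕ) : ZMod k)).sum = 0) :
    c * k ∣ U.sum.val := by
  have hsum : U.sum = (((U.map ZMod.val).sum : ℕ) : ZMod N) := by
    simp [Nat.cast_multiset_sum, map_map]
  have hfactor : (U.map ZMod.val).sum = c * (U.map fun g => g.val / c).sum := by
    rw [← sum_map_mul_left]
    exact congrArg sum (map_congr rfl fun g hg => (Nat.mul_div_cancel' (hc g hg)).symm)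
  have hkdvd : k ∣ (U.map fun g => g.val / c).sum := by
    rw [← ZMod.natCast_eq_zero_iff]
    simpa [Nat.cast_multiset_sum, map_map, Function.comp_def] using hk
  rw [hsum, ZMod.val_natCast, Nat.dvd_mod_iff hN, hfactor]
  exact mul_dvd_mul_left c hkdvd

end Weight

section PrimePower

variable {q : ℕ} [hq : Fact q.Prime] {m : ℕ}

theorem exists_weight_eq_pow (g : ZMod (q ^ m)) : ∃ j ≤ m, weight g = q ^ j :=
  (Nat.dvd_prime_pow hq.out).mp (weight_dvd g)

theorem exists_weight_eq_pow_of_ne_zero {g : ZMod (q ^ m)} (hg : g ≠ 0) :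
    ∃ j < m, weight g = q ^ j := by
  obtain ⟨j, hj, hw⟩ := exists_weight_eq_pow g
  refine ⟨j, lt_of_le_of_ne hj fun hjm => hg ?_, hw⟩
  subst hjm
  have hdvd : q ^ j ∣ g.val := (dvd_weight_iff dvd_rfl).mp hw.symm.dvd
  exact (ZMod.val_eq_zero g).mp (Nat.eq_zero_of_dvd_of_lt hdvd (ZMod.val_lt g))

theorem weight_dvd_weight_of_le {g h : ZMod (q ^ m)} (hle : weight g ≤ weight h) :
    weight g ∣ weight h := by
  obtain ⟨i, -, hi⟩ := exists_weight_eq_pow g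
  obtain ⟨j, -, hj⟩ := exists_weight_eq_pow h
  rw [hi, hj] at hle ⊢
  exact pow_dvd_pow q ((Nat.pow_le_pow_iff_right hq.out.one_lt).mp hle)

theorem exists_le_pow_succ_dvd_weight_sum {S : Multiset (ZMod (q ^ m))} {j : ℕ} (hj : j < m)
    (hcount : q ≤ (S.map weight).count (q ^ j)) :
    ∃ U ≤ S, U ≠ 0 ∧ card U ≤ q ∧ (∀ g ∈ U, weight g = q ^ j) ∧
      q ^ (j + 1) ∣ weight U.sum := by
  set F := S.filter fun g => q ^ j = weight g
  obtain ⟨U, hUF, hU0, hUcard, hUsum⟩ :=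
    F.exists_le_map_sum_eq_zero (fun g => ((g.val / q ^ j : ℕ) : ZMod q))
      (by rwa [ZMod.card, ← count_map])
  have hw : ∀ g ∈ U, weight g = q ^ j := fun g hg => (of_mem_filter (mem_of_le hUF hg)).symm
  refine ⟨U, hUF.trans (filter_le _ _), hU0, by rwa [ZMod.card] at hUcard, hw, ?_⟩
  rw [dvd_weight_iff (pow_dvd_pow q hj), pow_succ]
  refine dvd_val_sum (pow_succ q j ▸ pow_dvd_pow q hj) U (fun g hg => ?_) hUsum
  exact (dvd_weight_iff (pow_dvd_pow q hj.le)).mp (hw g hg).symm.dvd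

/-- The witness replaces a block of at most `q` elements of weight `q^j` by its sum, whose
weight is at least `q^(j+1)`. -/
theorem exists_isZeroSumFree_card_lt {S : Multiset (ZMod (q ^ m))} (hS : IsZeroSumFree S)
    {j : ℕ} (hj : j < m) (hcount : q ≤ (S.map weight).count (q ^ j)) :
    ∃ S' : Multiset (ZMod (q ^ m)),
      IsZeroSumFree S' ∧ card S' < card S ∧ totalWeight S ≤ totalWeight S' := by
  obtain ⟨U, hUS, hU0, hUq, hw, hdvd⟩ := exists_le_pow_succ_dvd_weight_sum hj hcount
  have hwu : q ^ (j + 1) ≤ weight U.sum := Nat.le_of_dvd (weight_pos _) hdvd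
  have hqj : q ^ j < q ^ (j + 1) := Nat.pow_lt_pow_succ hq.out.one_lt
  have hUW : totalWeight U = card U * q ^ j := by
    rw [totalWeight, map_congr rfl hw, map_const', sum_replicate, smul_eq_mul]
  have hU2 : 2 ≤ card U := by
    by_contra! h
    have hU1 : card U = 1 := by
      have := card_pos.mpr hU0
      omega
    obtain ⟨g, rfl⟩ := card_eq_one.mp hU1
    rw [sum_singleton, hw g (mem_singleton_self g)] at hwu
    omega
  refine ⟨U.sum ::ₘ (S - U), hS.cons_sum_tsub hUS hU0, ?_, ?_⟩
  · rw [card_cons, card_sub hUS]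
    have := card_le_card hUS
    omega
  · have hsplit := congrArg totalWeight (tsub_add_cancel_of_le hUS)
    have hUq' : card U * q ^ j ≤ q ^ (j + 1) := pow_succ' q j ▸ Nat.mul_le_mul_right _ hUq
    rw [totalWeight_add, hUW] at hsplit
    rw [totalWeight_cons]
    omega

theorem totalWeight_lt_of_isZeroSumFree {S : Multiset (ZMod (q ^ m))} (hS : IsZeroSumFree S) :
    totalWeight S < q ^ m := by
  induction hn : card S using Nat.strong_induction_on generalizing S with
  | _ n ih =>
  by_contra! hW
  have hlevel : ∀ x ∈ S.map weight, ∃ j < m, q ^ j = x := by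
    intro x hx
    obtain ⟨g, hg, rfl⟩ := mem_map.mp hx
    obtain ⟨j, hj, hw⟩ := exists_weight_eq_pow_of_ne_zero (hS.ne_zero_of_mem hg)
    exact ⟨j, hj, hw.symm⟩
  obtain ⟨j, hj, hcount⟩ : ∃ j < m, q ≤ (S.map weight).count (q ^ j) := by
    by_contra! h
    exact hW.not_gt ((S.map weight).sum_lt_pow_of_count_pow_lt hq.out.one_lt hlevel h)
  obtain ⟨S', hS', hcard, hle⟩ := exists_isZeroSumFree_card_lt hS hj hcount
  exact hW.not_gt ((ih _ (hn ▸ hcard) hS' rfl).trans_le' hle)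

theorem totalWeight_eq_of_minimal {T : Multiset (ZMod (q ^ m))} (hT : q ^ m ≤ totalWeight T)
    (hmin : ∀ g ∈ T, totalWeight (T.erase g) < q ^ m) : totalWeight T = q ^ m := by
  have hT0 : T ≠ 0 := by
    rintro rfl
    exact (pow_pos hq.out.pos m).not_ge hT
  obtain ⟨g, hg, hgmin⟩ :=
    Finset.exists_min_image T.toFinset weight (toFinset_nonempty.mpr hT0)
  rw [mem_toFinset] at hg
  have hdvd : weight g ∣ totalWeight T := dvd_sum fun x hx => by
    obtain ⟨h, hh, rfl⟩ := mem_map.mp hx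
    exact weight_dvd_weight_of_le (hgmin h (mem_toFinset.mpr hh))
  have hsplit : totalWeight T = weight g + totalWeight (T.erase g) := by
    rw [← totalWeight_cons, cons_erase hg]
  exact Nat.eq_of_dvd_of_le_of_lt_add hdvd (weight_dvd g) hT (by have := hmin g hg; omega)

theorem exists_zero_sum_totalWeight_le {S : Multiset (ZMod (q ^ m))}
    (hS : q ^ m ≤ totalWeight S) :
    ∃ T ≤ S, T ≠ 0 ∧ T.sum = 0 ∧ totalWeight T ≤ q ^ m := by
  obtain ⟨T, ⟨hTS, hTW⟩, hmin⟩ :=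
    wellFounded_lt.has_min {T | T ≤ S ∧ q ^ m ≤ totalWeight T} ⟨S, le_rfl, hS⟩
  have hTeq : totalWeight T = q ^ m := totalWeight_eq_of_minimal hTW fun g hg => by
    by_contra! h
    exact hmin _ ⟨(erase_le g T).trans hTS, h⟩ (erase_lt.mpr hg)
  have hT : ¬ IsZeroSumFree T := fun h => (totalWeight_lt_of_isZeroSumFree h).ne hTeq
  simp only [IsZeroSumFree, not_forall, not_not] at hT
  obtain ⟨U, hUT, hU0, hU⟩ := hT
  exact ⟨U, hUT.trans hTS, hU0, hU, (totalWeight_mono hUT).trans hTeq.le⟩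

theorem exists_zero_sum_crossNum_le_one {S : Multiset (ZMod (q ^ m))} (hS : 1 ≤ crossNum S) :
    ∃ T ≤ S, T ≠ 0 ∧ T.sum = 0 ∧ crossNum T ≤ 1 := by
  have hN : (0 : ℝ) < (q ^ m : ℕ) := by exact_mod_cast pow_pos hq.out.pos m
  rw [crossNum_eq_totalWeight_div, one_le_div hN, Nat.cast_le] at hS
  obtain ⟨T, hTS, hT0, hT, hTW⟩ := exists_zero_sum_totalWeight_le hS
  refine ⟨T, hTS, hT0, hT, ?_⟩
  rw [crossNum_eq_totalWeight_div, div_le_one hN]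
  exact_mod_cast hTW

end PrimePower

end CrossNumber

theorem crossNum_nonneg {G : Type*} [AddCommGroup G] (S : Multiset G) : 0 ≤ crossNum S :=
  sum_nonneg fun _ hx => by
    obtain ⟨g, -, rfl⟩ := mem_map.mp hx
    positivity

theorem crossNum_add_s19 {G : Type*} [AddCommGroup G] (A B : Multiset G) :
    crossNum (A + B) = crossNum A + crossNum B := by
  simp [crossNum]

theorem exists_disjoint_zero_sum_of_crossNum_le {G : Type*} [AddCommGroup G] [DecidableEq G]
    (h : ∀ S : Multiset G, 1 ≤ crossNum S →
      ∃ T ≤ S, T ≠ 0 ∧ T.sum = 0 ∧ crossNum T ≤ 1)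
    (n : ℕ) (S : Multiset G) (hn : n ≤ crossNum S) :
    ∃ L : List (Multiset G), n ≤ L.length ∧ L.sum ≤ S ∧
      ∀ T ∈ L, T ≠ 0 ∧ T.sum = 0 := by
  induction n generalizing S with
  | zero => exact ⟨[], le_rfl, Multiset.zero_le S, by simp⟩
  | succ n ih =>
    push_cast at hn
    obtain ⟨T, hTS, hT0, hT, hT1⟩ := h S (by linarith [(n.cast_nonneg : (0 : ℝ) ≤ n)])
    have hrest : crossNum S = crossNum (S - T) + crossNum T := by
      rw [← crossNum_add_s19, tsub_add_cancel_of_le hTS]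
    obtain ⟨L, hL, hLS, hLT⟩ := ih (S - T) (by linarith)
    refine ⟨T :: L, by simpa using hL, ?_, ?_⟩
    · calc (T :: L).sum = T + L.sum := List.sum_cons
        _ ≤ T + (S - T) := add_le_add_right hLS T
        _ = S := add_tsub_cancel_of_le hTS
    · simpa [hT0, hT] using hLT

open CrossNumber in
theorem zmod_prime_pow_disjoint_zero_sum_subsequences_general
    (q : ℕ) (hq : q.Prime) (m : ℕ) (S : Multiset (ZMod (q ^ m))) :
    (∃ L : List (Multiset (ZMod (q ^ m))),
        (⌊crossNum S⌋).toNat ≤ L.length ∧ L.sum ≤ S ∧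
          ∀ T ∈ L, T ≠ 0 ∧ T.sum = 0) ∧
      (1 ≤ crossNum S →
        ∃ T : Multiset (ZMod (q ^ m)), T ≤ S ∧ T ≠ 0 ∧ T.sum = 0 ∧ crossNum T ≤ 1) := by
  have := Fact.mk hq
  refine ⟨?_, exists_zero_sum_crossNum_le_one⟩
  rw [Int.floor_toNat]
  exact exists_disjoint_zero_sum_of_crossNum_le (fun _ => exists_zero_sum_crossNum_le_one) _ S
    (Nat.floor_le (crossNum_nonneg S))

/-- Over `C_{q^m}` (`q` prime, `m ≥ 1`), every sequence `S` contains at least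
`⌊k(S)⌋` pairwise disjoint nonempty zero-sum subsequences; in particular every
sequence `S` with `k(S) ≥ 1` has a nonempty zero-sum subsequence `T` with
`k(T) ≤ 1`. -/
theorem zmod_prime_pow_disjoint_zero_sum_subsequences
    (q : ℕ) (hq : q.Prime) (m : ℕ) (hm : 0 < m) (S : Multiset (ZMod (q ^ m))) :
    (∃ L : List (Multiset (ZMod (q ^ m))),
        (⌊crossNum S⌋).toNat ≤ L.length ∧ L.sum ≤ S ∧
          ∀ T ∈ L, T ≠ 0 ∧ T.sum = 0) ∧
      (1 ≤ crossNum S →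
        ∃ T : Multiset (ZMod (q ^ m)), T ≤ S ∧ T ≠ 0 ∧ T.sum = 0 ∧ crossNum T ≤ 1) :=
  zmod_prime_pow_disjoint_zero_sum_subsequences_general q hq m S
end
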